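/- arXiv:1906.06314 — 2 statements merged into one kernel-verified Lean document; each statement's English description precedes it below -/
import Mathlib

section
/- Let d ≥ 2, let 0 ≤ l_j < h_j for j = 1, …, d−1, let p₁, …, p_n ∈ ℝ^d be pairwise distinct, and define c_i ∈ ℝ^d by c_i[d] = Σ_{j=1}^{d−1} l_j·p_i[j] + p_i[d] and c_i[j] = (p_i[d] + h_j·p_i[j] + Σ_{k=1, k≠j}^{d−1} l_k·p_i[k]) / h_j for j ≤ d−1. If c_i is a skyline point of {c₁, …, c_n} (i.e., there is no j ≠ i with c_j[k] ≤ c_i[k] for all k = 1, …, d), then p_i is an eclipse point of {p₁, …, p_n} with respect to the ranges [l_j, h_j]. (Sound direction of the high-dimensional transformation: skyline points of the mapped dataset correspond to eclipse points.) -/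
/-- The weighted sum `S(p)_r = sum_{j<d-1} r[j]*p[j] + p[d-1]` of a point
`p` in `R^d` for a ratio vector `r` in `R^(d-1)`, with `d = m + 1`. -/
noncomputable def wsum {m : ℕ} (p : Fin (m + 1) → ℝ) (r : Fin m → ℝ) : ℝ :=
  (∑ j : Fin m, r j * p j.castSucc) + p (Fin.last m)

/-- `p` eclipse-dominates `q` w.r.t. the ranges `[l j, h j]`. -/
def eclipseDom {m : ℕ} (l h : Fin m → ℝ) (p q : Fin (m + 1) → ℝ) : Prop :=
  p ≠ q ∧ ∀ r : Fin m → ℝ, (∀ j, r j ∈ Set.Icc (l j) (h j)) → wsum p r ≤ wsum q r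

/-- The last coordinate `c[d]` of the mapped point of `p`. -/
noncomputable def cLast {m : ℕ} (l : Fin m → ℝ) (p : Fin (m + 1) → ℝ) : ℝ :=
  (∑ k : Fin m, l k * p k.castSucc) + p (Fin.last m)

/-- The `j`-th coordinate (`j < d - 1`) of the mapped point of `p`. -/
noncomputable def cCoord {m : ℕ} (l h : Fin m → ℝ) (p : Fin (m + 1) → ℝ) (j : Fin m) : ℝ :=
  (p (Fin.last m) + h j * p j.castSucc +
    ∑ k ∈ Finset.univ.erase j, l k * p k.castSucc) / h j

/-!
Eclipse dominance of `q` by `p` compares the weighted sums for every ratio vector in the box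
`∏ [l j, h j]`. Each coordinate of the mapped point is such a weighted sum at a vertex of the box
(rescaled by a positive factor): `c[d]` is the sum at `r = l`, and `c[j]` is the sum at `l` with its
`j`-th entry raised to `h j`, divided by `h j`. Hence an eclipse dominator of `p i` maps to a point
dominating `c_i` coordinatewise, contradicting that `c_i` is a skyline point.
-/

open Finset

section

variable {m : ℕ}

lemma wsum_update (p : Fin (m + 1) → ℝ) (r : Fin m → ℝ) (k : Fin m) (a : ℝ) :
    wsum p (Function.update r k a) =
      p (Fin.last m) + a * p k.castSucc + ∑ t ∈ univ.erase k, r t * p t.castSucc := by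
  have hrest : ∑ t ∈ univ.erase k, Function.update r k a t * p t.castSucc =
      ∑ t ∈ univ.erase k, r t * p t.castSucc :=
    sum_congr rfl fun t ht => by rw [Function.update_of_ne (ne_of_mem_erase ht)]
  rw [wsum, ← add_sum_erase _ _ (mem_univ k), hrest, Function.update_self]
  ring

lemma cCoord_eq_wsum_update_div (l h : Fin m → ℝ) (p : Fin (m + 1) → ℝ) (k : Fin m) :
    cCoord l h p k = wsum p (Function.update l k (h k)) / h k := by
  rw [cCoord, wsum_update]

lemma update_mem_Icc {l h : Fin m → ℝ} (hlh : ∀ j, l j ≤ h j) (k j : Fin m) :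
    Function.update l k (h k) j ∈ Set.Icc (l j) (h j) := by
  rcases eq_or_ne j k with rfl | hjk
  · simpa using hlh j
  · simpa [Function.update_of_ne hjk] using hlh j

namespace eclipseDom

variable {l h : Fin m → ℝ} {p q : Fin (m + 1) → ℝ}

lemma cLast_le (hlh : ∀ j, l j ≤ h j) (hpq : eclipseDom l h p q) : cLast l p ≤ cLast l q :=
  hpq.2 l fun j => ⟨le_rfl, hlh j⟩

lemma cCoord_le (hlh : ∀ j, l j ≤ h j) (hpq : eclipseDom l h p q) {k : Fin m} (hk : 0 ≤ h k) :
    cCoord l h p k ≤ cCoord l h q k := by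
  rw [cCoord_eq_wsum_update_div, cCoord_eq_wsum_update_div]
  exact div_le_div_of_nonneg_right (hpq.2 _ (update_mem_Icc hlh k)) hk

end eclipseDom

end

theorem mapped_skyline_imp_eclipse_point_general (m n : ℕ)
    (l h : Fin m → ℝ) (hl : ∀ j, 0 ≤ l j) (hlh : ∀ j, l j < h j)
    (p : Fin n → (Fin (m + 1) → ℝ)) (i : Fin n)
    (hsky : ¬ ∃ j : Fin n, j ≠ i ∧
      (∀ k : Fin m, cCoord l h (p j) k ≤ cCoord l h (p i) k) ∧
      cLast l (p j) ≤ cLast l (p i)) :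
    ¬ ∃ j : Fin n, j ≠ i ∧ eclipseDom l h (p j) (p i) := by
  rintro ⟨j, hji, hdom⟩
  have hle : ∀ k, l k ≤ h k := fun k => (hlh k).le
  exact hsky ⟨j, hji, fun k => hdom.cCoord_le hle ((hl k).trans (hle k)), hdom.cLast_le hle⟩

/-- Sound direction of the high-dimensional transformation: skyline points of
the mapped dataset correspond to eclipse points. -/
theorem mapped_skyline_imp_eclipse_point (m n : ℕ) (hm : 1 ≤ m)
    (l h : Fin m → ℝ) (hl : ∀ j, 0 ≤ l j) (hlh : ∀ j, l j < h j)
    (p : Fin n → (Fin (m + 1) → ℝ)) (hinj : Function.Injective p) (i : Fin n)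
    (hsky : ¬ ∃ j : Fin n, j ≠ i ∧
      (∀ k : Fin m, cCoord l h (p j) k ≤ cCoord l h (p i) k) ∧
      cLast l (p j) ≤ cLast l (p i)) :
    ¬ ∃ j : Fin n, j ≠ i ∧ eclipseDom l h (p j) (p i) :=
  mapped_skyline_imp_eclipse_point_general m n l h hl hlh p i hsky
end

section
/- Let d ≥ 2, let l_j ≤ h_j for j = 1, …, d−1, and let p, p' ∈ ℝ^d. Then p eclipse-dominates p' with respect to the ranges [l_j, h_j] if and only if p ≠ p' and S(p)_r ≤ S(p')_r holds for every ratio vector r with each r[j] ∈ {l_j, h_j} (the 2^{d−1} corner domination vectors). (Correctness of the baseline algorithm: eclipse-dominance is decided by finitely many comparisons at the corner vectors.) -/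
lemma wsum_update_s18 {m : ℕ} (p : Fin (m + 1) → ℝ) (r : Fin m → ℝ) (i : Fin m) (x : ℝ) :
    wsum p (Function.update r i x) = wsum p r + (x - r i) * p i.castSucc := by
  unfold wsum
  have h1 : ∀ y : ℝ, (∑ j : Fin m, Function.update r i y j * p j.castSucc)
      = y * p i.castSucc + ∑ j ∈ Finset.univ.erase i, r j * p j.castSucc := by
    intro y
    rw [← Finset.add_sum_erase _ _ (Finset.mem_univ i), Function.update_self]
    congr 1
    refine Finset.sum_congr rfl fun j hj => ?_
    rw [Function.update_of_ne (Finset.ne_of_mem_erase hj)]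
  have h2 : (∑ j : Fin m, r j * p j.castSucc)
      = r i * p i.castSucc + ∑ j ∈ Finset.univ.erase i, r j * p j.castSucc :=
    (Finset.add_sum_erase _ _ (Finset.mem_univ i)).symm
  rw [h1, h2]; ring

/-- Correctness of the baseline algorithm: eclipse-dominance is decided by
finitely many comparisons at the corner vectors. -/
theorem eclipseDom_iff_corners (m : ℕ) (hm : 1 ≤ m)
    (l h : Fin m → ℝ) (hlh : ∀ j, l j ≤ h j) (p p' : Fin (m + 1) → ℝ) :
    eclipseDom l h p p' ↔
      (p ≠ p' ∧ ∀ r : Fin m → ℝ, (∀ j, r j = l j ∨ r j = h j) →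
        wsum p r ≤ wsum p' r) := by
  constructor
  · rintro ⟨hne, hall⟩
    refine ⟨hne, fun r hr => hall r fun j => ?_⟩
    rcases hr j with h1 | h1 <;> rw [h1]
    · exact ⟨le_refl _, hlh j⟩
    · exact ⟨hlh j, le_refl _⟩
  · rintro ⟨hne, hcorner⟩
    refine ⟨hne, fun r hr => ?_⟩
    have key : ∀ s : Finset (Fin m), ∀ r : Fin m → ℝ,
        (∀ j ∈ s, r j ∈ Set.Icc (l j) (h j)) →
        (∀ j ∉ s, r j = l j ∨ r j = h j) → wsum p r ≤ wsum p' r := by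
      intro s
      induction s using Finset.induction_on with
      | empty => intro r _ hout; exact hcorner r fun j => hout j (by simp)
      | @insert i s hi ih =>
        intro r hin hout
        have hri := hin i (Finset.mem_insert_self i s)
        have hl : wsum p (Function.update r i (l i)) ≤ wsum p' (Function.update r i (l i)) := by
          apply ih
          · intro j hj
            rcases eq_or_ne j i with rfl | hji
            · exact absurd hj hi
            · rw [Function.update_of_ne hji]; exact hin j (Finset.mem_insert_of_mem hj)
          · intro j hj
            rcases eq_or_ne j i with rfl | hji
            · left; rw [Function.update_self]
            · rw [Function.update_of_ne hji]
              exact hout j (by simp [hji, hj])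
        have hh : wsum p (Function.update r i (h i)) ≤ wsum p' (Function.update r i (h i)) := by
          apply ih
          · intro j hj
            rcases eq_or_ne j i with rfl | hji
            · exact absurd hj hi
            · rw [Function.update_of_ne hji]; exact hin j (Finset.mem_insert_of_mem hj)
          · intro j hj
            rcases eq_or_ne j i with rfl | hji
            · right; rw [Function.update_self]
            · rw [Function.update_of_ne hji]
              exact hout j (by simp [hji, hj])
        rw [wsum_update_s18, wsum_update_s18] at hl hh
        obtain ⟨h1, h2⟩ := hri
        set a := p i.castSucc - p' i.castSucc with ha
        rcases le_or_gt 0 a with hA | hA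
        · nlinarith [mul_nonneg (sub_nonneg.2 h2) hA]
        · nlinarith [mul_nonneg (neg_nonneg.2 (sub_nonpos.2 h1)) (neg_nonneg.2 hA.le)]
    exact key Finset.univ r (fun j _ => hr j) (fun j hj => absurd (Finset.mem_univ j) hj)
end
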